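/- Let P be a tree, ζ an ordinal, and R a nonempty well-founded subtree of P. Suppose that for each maximal element t of R there is a subtree R_t ⊆ P(t) with rank(R_t) = ζ, and that the sets R_t (for distinct maximal elements t of R) are pairwise totally incomparable (no element of one is comparable to an element of another). Let Q = R ∪ ⋃_{t ∈ Leaves(R)} R_t. Then for every μ ≤ ζ, Q^μ = R ∪ ⋃_{t ∈ Leaves(R)} R_t^μ; for every ordinal η, Q^{ζ+η} = R^η; and in particular rank(Q) = ζ + rank(R). -/

import Mathlib

open Ordinal Set

universe u

/-- The set of maximal elements ("leaves") of `P`. -/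
def treeLeaves {α : Type u} [PartialOrder α] (P : Set α) : Set α :=
  {t ∈ P | ∀ s ∈ P, ¬ t < s}

/-- The derivative `P' = P \ Leaves P`. -/
def treeDeriv {α : Type u} [PartialOrder α] (P : Set α) : Set α :=
  P \ treeLeaves P

/-- The transfinite iterated derivative `P^ξ`. -/
noncomputable def derivIter {α : Type u} [PartialOrder α] (P : Set α) (ξ : Ordinal.{u}) :
    Set α :=
  Ordinal.limitRecOn ξ P (fun _ ih => treeDeriv ih)
    (fun o _ ih => ⋂ (ζ : Set.Iio o), ih ζ.1 ζ.2)

/-- `P` is a tree: every ancestor set is well-ordered (a well-founded chain). -/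
def IsTree {α : Type u} [PartialOrder α] (P : Set α) : Prop :=
  ∀ t ∈ P, IsChain (· ≤ ·) {s ∈ P | s ≤ t} ∧ {s ∈ P | s ≤ t}.WellFoundedOn (· < ·)

/-- `P` is well-founded: some transfinite derivative is empty. -/
def IsWFTree {α : Type u} [PartialOrder α] (P : Set α) : Prop :=
  ∃ ξ : Ordinal.{u}, derivIter P ξ = ∅

/-- The rank of a well-founded tree: the least `ξ` with `P^ξ = ∅`. -/
noncomputable def treeRank {α : Type u} [PartialOrder α] (P : Set α) : Ordinal.{u} :=
  sInf {ξ | derivIter P ξ = ∅}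

/-- `τ_P(t)`: the largest ordinal `ξ` with `t ∈ P^ξ`. -/
noncomputable def treeTau {α : Type u} [PartialOrder α] (P : Set α) (t : α) : Ordinal.{u} :=
  sSup {ξ | t ∈ derivIter P ξ}

/-- `τ_{P,β}(t)`: the largest ordinal `ξ` with `t ∈ P^{β·ξ}`. -/
noncomputable def treeTauMul {α : Type u} [PartialOrder α] (P : Set α) (β : Ordinal.{u})
    (t : α) : Ordinal.{u} :=
  sSup {ξ | t ∈ derivIter P (β * ξ)}

/-- `alpProd ε i = ω^{ω^{ε 0}} · ⋯ · ω^{ω^{ε i}}`. -/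
noncomputable def alpProd (ε : ℕ → Ordinal.{u}) : ℕ → Ordinal.{u}
  | 0 => omega0 ^ omega0 ^ ε 0
  | (i + 1) => alpProd ε i * omega0 ^ omega0 ^ ε (i + 1)

/-- The separation function `ς_P` of a tree whose rank has decomposition
`ω^{ω^{ε 0}} ⋯ ω^{ω^{ε l}}`: the least `i` such that `s, t` lie in the same block
`P^{α_i·δ} \ P^{α_i·(δ+1)}` for some ordinal `δ`. -/
noncomputable def sep {α : Type u} [PartialOrder α] (P : Set α) (ε : ℕ → Ordinal.{u})
    (s t : α) : ℕ :=
  sInf {i : ℕ | ∃ δ : Ordinal.{u},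
    s ∈ derivIter P (alpProd ε i * δ) \ derivIter P (alpProd ε i * (δ + 1)) ∧
    t ∈ derivIter P (alpProd ε i * δ) \ derivIter P (alpProd ε i * (δ + 1))}

/-- `indProd ε A l = ω^{ω^{ε 0}·1_A(0)} ⋯ ω^{ω^{ε l}·1_A(l)}`. -/
noncomputable def indProd (ε : ℕ → Ordinal.{u}) (A : Set ℕ) : ℕ → Ordinal.{u}
  | 0 => omega0 ^ (omega0 ^ ε 0 * A.indicator (fun _ => (1 : Ordinal.{u})) 0)
  | (i + 1) => indProd ε A i *
      omega0 ^ (omega0 ^ ε (i + 1) * A.indicator (fun _ => (1 : Ordinal.{u})) (i + 1))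

/-- `sumPow ε i = ω^{ε 0} + ⋯ + ω^{ε (i-1)}` (the partial sums `γ_i`). -/
noncomputable def sumPow (ε : ℕ → Ordinal.{u}) : ℕ → Ordinal.{u}
  | 0 => 0
  | (i + 1) => sumPow ε i + omega0 ^ ε i

/-- `indSum ε A i = Σ_{n < i} 1_A(n)·ω^{ε n}`. -/
noncomputable def indSum (ε : ℕ → Ordinal.{u}) (A : Set ℕ) : ℕ → Ordinal.{u}
  | 0 => 0
  | (i + 1) => indSum ε A i + A.indicator (fun _ => (1 : Ordinal.{u})) i * omega0 ^ ε i

/-!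
While `ν < ζ` every leaf `t` of `R` still carries the nonempty tree `R_t^ν` above it, so no
point of `R` is a leaf of `Q^ν = R ∪ ⋃ R_t^ν`, and, since distinct `R_t` are incomparable, the
leaves of `Q^ν` are exactly those of the `R_t^ν`. Hence deriving `Q` strips all the `R_t` in
parallel and leaves `R` untouched; at limit stages the incomparability (in particular the
disjointness) of the `R_t` lets the intersection pass through the union. At stage `ζ` every
`R_t` is used up, so `Q^ζ = R`, and then `Q^{ζ+η} = R^η` and `rank Q = ζ + rank R`.
-/

section TreeDerivatives

variable {α : Type u} [PartialOrder α]

lemma derivIter_zero (P : Set α) : derivIter P 0 = P :=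
  Ordinal.limitRecOn_zero ..

lemma derivIter_add_one (P : Set α) (ξ : Ordinal.{u}) :
    derivIter P (ξ + 1) = treeDeriv (derivIter P ξ) :=
  Ordinal.limitRecOn_add_one ..

lemma derivIter_limit (P : Set α) {ξ : Ordinal.{u}} (h : Order.IsSuccLimit ξ) :
    derivIter P ξ = ⋂ ν : Iio ξ, derivIter P ν :=
  Ordinal.limitRecOn_limit _ _ _ _ h

lemma derivIter_anti (P : Set α) : Antitone (derivIter P) := by
  intro a b hab
  induction b using Ordinal.limitRecOn with
  | zero => rw [nonpos_iff_eq_zero.1 hab]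
  | add_one b ih =>
    rcases (Order.le_succ_iff_eq_or_le.1 (Order.succ_eq_add_one b ▸ hab)) with rfl | hab
    · rw [Order.succ_eq_add_one]
    · rw [derivIter_add_one]
      exact sdiff_subset.trans (ih hab)
  | limit b hb _ =>
    rcases hab.eq_or_lt with rfl | hab
    · exact subset_rfl
    · rw [derivIter_limit P hb]
      exact iInter_subset (fun ν : Iio b => derivIter P ν) ⟨a, hab⟩

lemma derivIter_subset (P : Set α) (ξ : Ordinal.{u}) : derivIter P ξ ⊆ P := by
  simpa only [derivIter_zero] using derivIter_anti P (zero_le : 0 ≤ ξ)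

lemma derivIter_add (P : Set α) (a b : Ordinal.{u}) :
    derivIter P (a + b) = derivIter (derivIter P a) b := by
  induction b using Ordinal.limitRecOn with
  | zero => rw [add_zero, derivIter_zero]
  | add_one b ih => rw [← add_assoc, derivIter_add_one, derivIter_add_one, ih]
  | limit b hb ih =>
    rw [derivIter_limit P (isSuccLimit_add a hb), derivIter_limit _ hb]
    refine subset_antisymm (fun x hx => ?_) (fun x hx => ?_) <;> simp only [mem_iInter] at hx ⊢
    · rintro ⟨ν, hν⟩
      exact ih ν hν ▸ hx ⟨a + ν, add_lt_add_right hν a⟩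
    · rintro ⟨ν, hν⟩
      rcases le_or_gt ν a with hνa | haν
      · have hxa : x ∈ derivIter P a := by simpa [← ih 0 hb.pos] using hx ⟨0, hb.pos⟩
        exact derivIter_anti P hνa hxa
      · have hsub : ν - a < b := sub_lt_of_lt_add hν hb.pos
        simpa [← ih _ hsub, Ordinal.add_sub_cancel_of_le haν.le] using hx ⟨ν - a, hsub⟩

lemma treeRank_le {P : Set α} {ξ : Ordinal.{u}} (h : derivIter P ξ = ∅) :
    treeRank P ≤ ξ :=
  csInf_le' h

lemma derivIter_treeRank {P : Set α} (h : IsWFTree P) : derivIter P (treeRank P) = ∅ :=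
  csInf_mem (s := {ξ | derivIter P ξ = ∅}) h

lemma derivIter_nonempty_of_lt_treeRank {P : Set α} {ξ : Ordinal.{u}} (h : ξ < treeRank P) :
    (derivIter P ξ).Nonempty :=
  nonempty_iff_ne_empty.2 fun h' => (treeRank_le h').not_gt h

lemma treeRank_eq_add_of_derivIter_eq {Q R : Set α} {ζ : Ordinal.{u}}
    (hQR : derivIter Q ζ = R) (hR : R.Nonempty) (hRwf : IsWFTree R) :
    treeRank Q = ζ + treeRank R := by
  have hshift : ∀ η, derivIter Q (ζ + η) = derivIter R η := by
    intro η
    rw [derivIter_add, hQR]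
  have hQ_empty : derivIter Q (ζ + treeRank R) = ∅ := by rw [hshift, derivIter_treeRank hRwf]
  have hQrank := derivIter_treeRank ⟨_, hQ_empty⟩
  have hζ : ζ ≤ treeRank Q := by
    by_contra! h
    exact hR.ne_empty (subset_empty_iff.1 (hQR ▸ hQrank ▸ derivIter_anti Q h.le))
  refine (treeRank_le hQ_empty).antisymm ?_
  rw [← Ordinal.add_sub_cancel_of_le hζ, hshift] at hQrank
  calc ζ + treeRank R ≤ ζ + (treeRank Q - ζ) := by gcongr; exact treeRank_le hQrank
    _ = treeRank Q := Ordinal.add_sub_cancel_of_le hζ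

end TreeDerivatives

lemma iInter_union_biUnion_of_pairwiseDisjoint {ι β γ : Type*} [Nonempty ι] (R : Set γ)
    {L : Set β} {S : β → Set γ} (hS : L.PairwiseDisjoint S) (T : ι → β → Set γ)
    (hT : ∀ i, ∀ t ∈ L, T i t ⊆ S t) :
    ⋂ i, (R ∪ ⋃ t ∈ L, T i t) = R ∪ ⋃ t ∈ L, ⋂ i, T i t := by
  refine subset_antisymm (fun x hx => ?_) (union_subset (subset_iInter fun _ => subset_union_left)
    (iUnion₂_subset fun t ht => subset_iInter fun i =>
      (iInter_subset _ i).trans (subset_union_of_subset_right (subset_biUnion_of_mem ht) R)))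
  simp only [mem_iInter, mem_union, mem_iUnion] at hx ⊢
  refine or_iff_not_imp_left.2 fun hxR => ?_
  have hpick : ∀ i, ∃ t ∈ L, x ∈ T i t := fun i => by simpa [hxR] using hx i
  obtain ⟨t, ht, hxt⟩ := hpick (Classical.arbitrary ι)
  refine ⟨t, ht, fun i => ?_⟩
  obtain ⟨t', ht', hxt'⟩ := hpick i
  rwa [hS.elim ht ht' (not_disjoint_iff.2 ⟨x, hT _ t ht hxt, hT i t' ht' hxt'⟩)]

section Grafting

variable {α : Type u} [PartialOrder α] {R : Set α} {S : α → Set α}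

lemma notMem_treeLeaves_union_biUnion (hgt : ∀ t ∈ treeLeaves R, ∀ x ∈ S t, t < x)
    (hne : ∀ t ∈ treeLeaves R, (S t).Nonempty) {r : α} (hr : r ∈ R) :
    r ∉ treeLeaves (R ∪ ⋃ t ∈ treeLeaves R, S t) := by
  rintro ⟨-, hmax⟩
  by_cases hrL : r ∈ treeLeaves R
  · obtain ⟨x, hx⟩ := hne r hrL
    exact hmax x (Or.inr (mem_biUnion hrL hx)) (hgt r hrL x hx)
  · obtain ⟨s, hs, hrs⟩ : ∃ s ∈ R, r < s := by simpa [treeLeaves, hr] using hrL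
    exact hmax s (Or.inl hs) hrs

lemma mem_treeLeaves_union_biUnion_iff (hgt : ∀ t ∈ treeLeaves R, ∀ x ∈ S t, t < x)
    (hinc : ∀ t ∈ treeLeaves R, ∀ t' ∈ treeLeaves R, t ≠ t' →
      ∀ a ∈ S t, ∀ b ∈ S t', ¬ a ≤ b)
    {t x : α} (ht : t ∈ treeLeaves R) (hx : x ∈ S t) :
    x ∈ treeLeaves (R ∪ ⋃ t ∈ treeLeaves R, S t) ↔ x ∈ treeLeaves (S t) := by
  refine ⟨fun hleaf => ⟨hx, fun s hs => hleaf.2 s (Or.inr (mem_biUnion ht hs))⟩,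
    fun hleaf => ⟨Or.inr (mem_biUnion ht hx), ?_⟩⟩
  rintro y (hy | hy) hxy
  · exact ht.2 y hy ((hgt t ht x hx).trans hxy)
  · obtain ⟨t', ht', hyt'⟩ := mem_iUnion₂.1 hy
    by_cases htt' : t = t'
    · subst htt'
      exact hleaf.2 y hyt' hxy
    · exact hinc t ht t' ht' htt' x hx y hyt' hxy.le

lemma treeDeriv_union_biUnion (hgt : ∀ t ∈ treeLeaves R, ∀ x ∈ S t, t < x)
    (hinc : ∀ t ∈ treeLeaves R, ∀ t' ∈ treeLeaves R, t ≠ t' →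
      ∀ a ∈ S t, ∀ b ∈ S t', ¬ a ≤ b)
    (hne : ∀ t ∈ treeLeaves R, (S t).Nonempty) :
    treeDeriv (R ∪ ⋃ t ∈ treeLeaves R, S t) =
      R ∪ ⋃ t ∈ treeLeaves R, treeDeriv (S t) := by
  ext x
  simp only [treeDeriv, mem_sdiff, mem_union, mem_iUnion₂, exists_prop]
  constructor
  · rintro ⟨hx | ⟨t, ht, hxt⟩, hnl⟩
    · exact Or.inl hx
    · exact Or.inr ⟨t, ht, hxt,
        fun h => hnl ((mem_treeLeaves_union_biUnion_iff hgt hinc ht hxt).2 h)⟩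
  · rintro (hx | ⟨t, ht, hxt, hnl⟩)
    · exact ⟨Or.inl hx, notMem_treeLeaves_union_biUnion hgt hne hx⟩
    · exact ⟨Or.inr ⟨t, ht, hxt⟩,
        fun h => hnl ((mem_treeLeaves_union_biUnion_iff hgt hinc ht hxt).1 h)⟩

lemma derivIter_union_biUnion (hgt : ∀ t ∈ treeLeaves R, ∀ x ∈ S t, t < x)
    (hinc : ∀ t ∈ treeLeaves R, ∀ t' ∈ treeLeaves R, t ≠ t' →
      ∀ a ∈ S t, ∀ b ∈ S t', ¬ a ≤ b)
    {μ : Ordinal.{u}} (hne : ∀ ν < μ, ∀ t ∈ treeLeaves R, (derivIter (S t) ν).Nonempty) :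
    derivIter (R ∪ ⋃ t ∈ treeLeaves R, S t) μ =
      R ∪ ⋃ t ∈ treeLeaves R, derivIter (S t) μ := by
  induction μ using Ordinal.limitRecOn with
  | zero => simp only [derivIter_zero]
  | add_one μ ih =>
    rw [derivIter_add_one, ih fun ν hν => hne ν (hν.trans (lt_add_one μ)),
      treeDeriv_union_biUnion (fun t ht x hx => hgt t ht x (derivIter_subset _ _ hx))
        (fun t ht t' ht' htt' a ha b hb =>
          hinc t ht t' ht' htt' a (derivIter_subset _ _ ha) b (derivIter_subset _ _ hb))
        (hne μ (lt_add_one μ))]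
    simp only [derivIter_add_one]
  | limit μ hμ ih =>
    have : Nonempty (Iio μ) := ⟨⟨0, hμ.pos⟩⟩
    have hdisj : (treeLeaves R).PairwiseDisjoint S := fun t ht t' ht' htt' =>
      disjoint_left.2 fun a ha ha' => hinc t ht t' ht' htt' a ha a ha' le_rfl
    calc derivIter (R ∪ ⋃ t ∈ treeLeaves R, S t) μ
        = ⋂ ν : Iio μ, (R ∪ ⋃ t ∈ treeLeaves R, derivIter (S t) ν) := by
          rw [derivIter_limit _ hμ]
          exact iInter_congr fun ν => ih ν ν.2 fun ξ hξ => hne ξ (hξ.trans ν.2)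
      _ = R ∪ ⋃ t ∈ treeLeaves R, ⋂ ν : Iio μ, derivIter (S t) ν :=
          iInter_union_biUnion_of_pairwiseDisjoint R hdisj _ fun _ _ _ => derivIter_subset _ _
      _ = R ∪ ⋃ t ∈ treeLeaves R, derivIter (S t) μ := by simp only [derivIter_limit _ hμ]

end Grafting

theorem statement12_general {α : Type u} [PartialOrder α] (P : Set α)
    (ζ : Ordinal.{u}) (R : Set α) (hRne : R.Nonempty)
    (hRwf : IsWFTree R) (Rt : α → Set α)
    (hRt : ∀ t ∈ treeLeaves R, Rt t ⊆ {s ∈ P | t < s} ∧ IsWFTree (Rt t) ∧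
      treeRank (Rt t) = ζ)
    (hinc : ∀ t ∈ treeLeaves R, ∀ t' ∈ treeLeaves R, t ≠ t' →
      ∀ a ∈ Rt t, ∀ b ∈ Rt t', ¬ a ≤ b ∧ ¬ b ≤ a) :
    (∀ μ ≤ ζ, derivIter (R ∪ ⋃ t ∈ treeLeaves R, Rt t) μ =
      R ∪ ⋃ t ∈ treeLeaves R, derivIter (Rt t) μ) ∧
    (∀ η : Ordinal.{u},
      derivIter (R ∪ ⋃ t ∈ treeLeaves R, Rt t) (ζ + η) = derivIter R η) ∧
    treeRank (R ∪ ⋃ t ∈ treeLeaves R, Rt t) = ζ + treeRank R := by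
  have hQμ : ∀ μ ≤ ζ, derivIter (R ∪ ⋃ t ∈ treeLeaves R, Rt t) μ =
      R ∪ ⋃ t ∈ treeLeaves R, derivIter (Rt t) μ := fun μ hμ =>
    derivIter_union_biUnion (fun t ht x hx => ((hRt t ht).1 hx).2)
      (fun t ht t' ht' htt' a ha b hb => (hinc t ht t' ht' htt' a ha b hb).1)
      fun ν hν t ht => derivIter_nonempty_of_lt_treeRank ((hRt t ht).2.2 ▸ hν.trans_le hμ)
  have hQζ : derivIter (R ∪ ⋃ t ∈ treeLeaves R, Rt t) ζ = R := by
    have hRt_ζ : ∀ t ∈ treeLeaves R, derivIter (Rt t) ζ = ∅ := fun t ht =>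
      (hRt t ht).2.2 ▸ derivIter_treeRank (hRt t ht).2.1
    rw [hQμ ζ le_rfl, iUnion₂_congr hRt_ζ]
    simp only [iUnion_empty, union_empty]
  refine ⟨hQμ, fun η => ?_, treeRank_eq_add_of_derivIter_eq hQζ hRne hRwf⟩
  rw [derivIter_add, hQζ]

/-- if `R` is a nonempty well-founded subtree of a tree `P` and
for each leaf `t` of `R` there is a subtree `R_t ⊆ P(t)` of rank `ζ`, the `R_t`
pairwise totally incomparable, then with `Q = R ∪ ⋃_t R_t` one has
`Q^μ = R ∪ ⋃_t R_t^μ` for `μ ≤ ζ`, `Q^{ζ+η} = R^η` for all `η`, and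
`rank(Q) = ζ + rank(R)`. -/
theorem statement12 {α : Type u} [PartialOrder α] (P : Set α) (hP : IsTree P)
    (ζ : Ordinal.{u}) (R : Set α) (hRP : R ⊆ P) (hRne : R.Nonempty)
    (hRwf : IsWFTree R) (Rt : α → Set α)
    (hRt : ∀ t ∈ treeLeaves R, Rt t ⊆ {s ∈ P | t < s} ∧ IsWFTree (Rt t) ∧
      treeRank (Rt t) = ζ)
    (hinc : ∀ t ∈ treeLeaves R, ∀ t' ∈ treeLeaves R, t ≠ t' →
      ∀ a ∈ Rt t, ∀ b ∈ Rt t', ¬ a ≤ b ∧ ¬ b ≤ a) :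
    (∀ μ ≤ ζ, derivIter (R ∪ ⋃ t ∈ treeLeaves R, Rt t) μ =
      R ∪ ⋃ t ∈ treeLeaves R, derivIter (Rt t) μ) ∧
    (∀ η : Ordinal.{u},
      derivIter (R ∪ ⋃ t ∈ treeLeaves R, Rt t) (ζ + η) = derivIter R η) ∧
    treeRank (R ∪ ⋃ t ∈ treeLeaves R, Rt t) = ζ + treeRank R :=
  statement12_general P ζ R hRne hRwf Rt hRt hinc
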